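/- arXiv:cs/0703037 — 5 statements merged into one kernel-verified Lean document; each statement's English description precedes it below -/
import Mathlib

section
/- For a finite set S of at least two points in ℝ² and v > 1, the optimal horizontal speed-v highway under the L₁ metric achieves travel-time diameter exactly δ = max_{p,q ∈ S} (|x_p − x_q|/v + |y_p − y_q|), and it is attained by the horizontal axis of symmetry of the smallest enclosing axis-aligned v-rhombus of S. -/
private lemma key_ineq (A B a a' b b' : ℝ)
    (h1 : -(A/2) ≤ a) (h2 : a ≤ A/2) (h3 : -(A/2) ≤ a') (h4 : a' ≤ A/2)
    (h5 : -(B/2) ≤ b) (h6 : b ≤ B/2) (h7 : -(B/2) ≤ b') (h8 : b' ≤ B/2) :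
    |a+b|/2 + |a'+b'|/2 + |(a-a')-(b-b')|/2 ≤ max A B := by
  have m1 := le_max_left A B
  have m2 := le_max_right A B
  rcases abs_cases (a+b) with ⟨e1,_⟩|⟨e1,_⟩ <;>
  rcases abs_cases (a'+b') with ⟨e2,_⟩|⟨e2,_⟩ <;>
  rcases abs_cases ((a-a')-(b-b')) with ⟨e3,_⟩|⟨e3,_⟩ <;>
  rw [e1, e2, e3] <;> linarith

private lemma highway_bound (v Fp Fm Gp Gm : ℝ) (hv0 : 0 < v) (p q : ℝ × ℝ)
    (ha1 : p.1 / v + p.2 ≤ Fp) (ha2 : Fm ≤ p.1 / v + p.2)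
    (ha3 : q.1 / v + q.2 ≤ Fp) (ha4 : Fm ≤ q.1 / v + q.2)
    (hb1 : p.2 - p.1 / v ≤ Gp) (hb2 : Gm ≤ p.2 - p.1 / v)
    (hb3 : q.2 - q.1 / v ≤ Gp) (hb4 : Gm ≤ q.2 - q.1 / v) :
    |p.2 - (Fp + Fm + Gp + Gm) / 4| + |q.2 - (Fp + Fm + Gp + Gm) / 4| + |p.1 - q.1| / v
      ≤ max (Fp - Fm) (Gp - Gm) := by
  set a := p.1 / v + p.2 - (Fp + Fm) / 2 with hadef
  set a' := q.1 / v + q.2 - (Fp + Fm) / 2 with ha'def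
  set b := p.2 - p.1 / v - (Gp + Gm) / 2 with hbdef
  set b' := q.2 - q.1 / v - (Gp + Gm) / 2 with hb'def
  have e1 : |p.2 - (Fp + Fm + Gp + Gm) / 4| = |a + b| / 2 := by
    rw [show a + b = 2 * (p.2 - (Fp + Fm + Gp + Gm) / 4) by rw [hadef, hbdef]; ring,
      abs_mul, abs_two]; ring
  have e2 : |q.2 - (Fp + Fm + Gp + Gm) / 4| = |a' + b'| / 2 := by
    rw [show a' + b' = 2 * (q.2 - (Fp + Fm + Gp + Gm) / 4) by rw [ha'def, hb'def]; ring,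
      abs_mul, abs_two]; ring
  have e3 : |p.1 - q.1| / v = |(a - a') - (b - b')| / 2 := by
    rw [show (a - a') - (b - b') = 2 * ((p.1 - q.1) / v) by
        rw [hadef, ha'def, hbdef, hb'def]; ring,
      abs_mul, abs_two, abs_div, abs_of_pos hv0]; ring
  rw [e1, e2, e3]
  exact key_ineq (Fp - Fm) (Gp - Gm) a a' b b'
    (by rw [hadef]; linarith) (by rw [hadef]; linarith)
    (by rw [ha'def]; linarith) (by rw [ha'def]; linarith)
    (by rw [hbdef]; linarith) (by rw [hbdef]; linarith)
    (by rw [hb'def]; linarith) (by rw [hb'def]; linarith)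

private lemma fin_set (v c : ℝ) (S : Finset (ℝ × ℝ)) :
    {y | ∃ p ∈ S, ∃ q ∈ S, y = min (|p.1 - q.1| + |p.2 - q.2|)
      (|p.2 - c| + |q.2 - c| + |p.1 - q.1| / v)}.Finite := by
  apply Set.Finite.subset (Set.Finite.image
    (fun pq : (ℝ×ℝ)×(ℝ×ℝ) => min (|pq.1.1 - pq.2.1| + |pq.1.2 - pq.2.2|)
      (|pq.1.2 - c| + |pq.2.2 - c| + |pq.1.1 - pq.2.1| / v))
    ((S.finite_toSet).prod (S.finite_toSet)))
  rintro y ⟨p, hp, q, hq, rfl⟩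
  exact ⟨(p,q), ⟨hp,hq⟩, rfl⟩

private lemma pair_lower (v c : ℝ) (hv : 1 < v) (p q : ℝ × ℝ) :
    |p.1 - q.1| / v + |p.2 - q.2| ≤ min (|p.1 - q.1| + |p.2 - q.2|)
      (|p.2 - c| + |q.2 - c| + |p.1 - q.1| / v) := by
  refine le_min ?_ ?_
  · have := div_le_self (abs_nonneg (p.1 - q.1)) hv.le
    linarith
  · have h := abs_sub_le p.2 c q.2
    rw [abs_sub_comm c q.2] at h
    linarith

theorem stmt5 (v : ℝ) (hv : 1 < v) (S : Finset (ℝ × ℝ)) (hS : 2 ≤ S.card) (δ : ℝ)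
    (hδ : IsGreatest {x | ∃ p ∈ S, ∃ q ∈ S, x = |p.1 - q.1| / v + |p.2 - q.2|} δ) :
    IsLeast {x | ∃ c : ℝ, x = sSup {y | ∃ p ∈ S, ∃ q ∈ S,
      y = min (|p.1 - q.1| + |p.2 - q.2|)
            (|p.2 - c| + |q.2 - c| + |p.1 - q.1| / v)}} δ := by
  have hv0 : (0:ℝ) < v := lt_trans one_pos hv
  have hne : S.Nonempty := Finset.card_pos.mp (by omega)
  obtain ⟨p₀, hp₀, q₀, hq₀, hδeq⟩ := hδ.1
  have hlow : ∀ c : ℝ, δ ≤ sSup {y | ∃ p ∈ S, ∃ q ∈ S,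
      y = min (|p.1 - q.1| + |p.2 - q.2|)
            (|p.2 - c| + |q.2 - c| + |p.1 - q.1| / v)} := by
    intro c
    have hmem : min (|p₀.1 - q₀.1| + |p₀.2 - q₀.2|)
        (|p₀.2 - c| + |q₀.2 - c| + |p₀.1 - q₀.1| / v) ∈ {y | ∃ p ∈ S, ∃ q ∈ S,
        y = min (|p.1 - q.1| + |p.2 - q.2|)
            (|p.2 - c| + |q.2 - c| + |p.1 - q.1| / v)} :=
      ⟨p₀, hp₀, q₀, hq₀, rfl⟩
    have := le_csSup (fin_set v c S).bddAbove hmem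
    have h2 := pair_lower v c hv p₀ q₀
    rw [hδeq]
    linarith
  constructor
  · obtain ⟨Fp, hFpdef⟩ : ∃ x, x = S.sup' hne (fun p => p.1 / v + p.2) := ⟨_, rfl⟩
    obtain ⟨Fm, hFmdef⟩ : ∃ x, x = S.inf' hne (fun p => p.1 / v + p.2) := ⟨_, rfl⟩
    obtain ⟨Gp, hGpdef⟩ : ∃ x, x = S.sup' hne (fun p => p.2 - p.1 / v) := ⟨_, rfl⟩
    obtain ⟨Gm, hGmdef⟩ : ∃ x, x = S.inf' hne (fun p => p.2 - p.1 / v) := ⟨_, rfl⟩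
    have hA : Fp - Fm ≤ δ := by
      obtain ⟨pM, hpM, hpMe⟩ := Finset.exists_mem_eq_sup' hne (fun p : ℝ × ℝ => p.1 / v + p.2)
      obtain ⟨pm, hpm, hpme⟩ := Finset.exists_mem_eq_inf' hne (fun p : ℝ × ℝ => p.1 / v + p.2)
      have hδ2 := hδ.2 ⟨pM, hpM, pm, hpm, rfl⟩
      have h1 : (pM.1 - pm.1) / v ≤ |pM.1 - pm.1| / v :=
        div_le_div_of_nonneg_right (le_abs_self _) hv0.le
      have h2 := le_abs_self (pM.2 - pm.2)
      have h3 : Fp - Fm = (pM.1 - pm.1) / v + (pM.2 - pm.2) := by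
        rw [hFpdef, hFmdef, hpMe, hpme]; ring
      linarith
    have hB : Gp - Gm ≤ δ := by
      obtain ⟨pM, hpM, hpMe⟩ := Finset.exists_mem_eq_sup' hne (fun p : ℝ × ℝ => p.2 - p.1 / v)
      obtain ⟨pm, hpm, hpme⟩ := Finset.exists_mem_eq_inf' hne (fun p : ℝ × ℝ => p.2 - p.1 / v)
      have hδ2 := hδ.2 ⟨pM, hpM, pm, hpm, rfl⟩
      have h1 : (pm.1 - pM.1) / v ≤ |pM.1 - pm.1| / v := by
        rw [abs_sub_comm]
        exact div_le_div_of_nonneg_right (le_abs_self _) hv0.le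
      have h2 := le_abs_self (pM.2 - pm.2)
      have h3 : Gp - Gm = (pm.1 - pM.1) / v + (pM.2 - pm.2) := by
        rw [hGpdef, hGmdef, hpMe, hpme]; ring
      linarith
    refine ⟨(Fp + Fm + Gp + Gm) / 4, ?_⟩
    have hub : ∀ y ∈ {y | ∃ p ∈ S, ∃ q ∈ S,
        y = min (|p.1 - q.1| + |p.2 - q.2|)
            (|p.2 - (Fp + Fm + Gp + Gm) / 4| + |q.2 - (Fp + Fm + Gp + Gm) / 4|
              + |p.1 - q.1| / v)}, y ≤ δ := by
      rintro y ⟨p, hp, q, hq, rfl⟩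
      refine le_trans (min_le_right _ _) (le_trans ?_ (max_le hA hB))
      refine highway_bound v Fp Fm Gp Gm hv0 p q ?_ ?_ ?_ ?_ ?_ ?_ ?_ ?_
      · rw [hFpdef]; exact Finset.le_sup' (fun r : ℝ × ℝ => r.1 / v + r.2) hp
      · rw [hFmdef]; exact Finset.inf'_le (fun r : ℝ × ℝ => r.1 / v + r.2) hp
      · rw [hFpdef]; exact Finset.le_sup' (fun r : ℝ × ℝ => r.1 / v + r.2) hq
      · rw [hFmdef]; exact Finset.inf'_le (fun r : ℝ × ℝ => r.1 / v + r.2) hq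
      · rw [hGpdef]; exact Finset.le_sup' (fun r : ℝ × ℝ => r.2 - r.1 / v) hp
      · rw [hGmdef]; exact Finset.inf'_le (fun r : ℝ × ℝ => r.2 - r.1 / v) hp
      · rw [hGpdef]; exact Finset.le_sup' (fun r : ℝ × ℝ => r.2 - r.1 / v) hq
      · rw [hGmdef]; exact Finset.inf'_le (fun r : ℝ × ℝ => r.2 - r.1 / v) hq
    have hnonempty : {y | ∃ p ∈ S, ∃ q ∈ S,
        y = min (|p.1 - q.1| + |p.2 - q.2|)
            (|p.2 - (Fp + Fm + Gp + Gm) / 4| + |q.2 - (Fp + Fm + Gp + Gm) / 4|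
              + |p.1 - q.1| / v)}.Nonempty :=
      ⟨_, ⟨p₀, hp₀, q₀, hq₀, rfl⟩⟩
    exact le_antisymm (hlow _) (csSup_le hnonempty hub)
  · rintro x ⟨c, rfl⟩
    exact hlow c
end

section
/- Let S be a finite point set, and suppose there exists an axis-aligned highway cross (a horizontal line and a vertical line) of infinite speed v = ∞ on both lines achieving travel-time diameter δ. Then there exists an enclosing cross of width δ for S, i.e., a union of a horizontal strip and a vertical strip, each of width δ, containing S. -/
/-- Travel-time distance between `p` and `q` given an axis-aligned highway cross of
infinite speed centered at `σ`, in the `L₁` metric: either walk directly, or walk to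
the cross (for free travel on it) and walk from the cross to the destination. -/
noncomputable def crossDistInf (σ p q : ℝ × ℝ) : ℝ :=
  min (|p.1 - q.1| + |p.2 - q.2|)
    (min |p.1 - σ.1| |p.2 - σ.2| + min |q.1 - σ.1| |q.2 - σ.2|)

theorem stmt10 (S : Finset (ℝ × ℝ)) (σ : ℝ × ℝ) (δ : ℝ) (hδ : 0 ≤ δ)
    (h : ∀ p ∈ S, ∀ q ∈ S, crossDistInf σ p q ≤ δ) :
    ∃ a b : ℝ, ∀ p ∈ S, (a ≤ p.2 ∧ p.2 ≤ a + δ) ∨ (b ≤ p.1 ∧ p.1 ≤ b + δ) := by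
  classical
  -- V: points at least as close to the vertical line; H: strictly closer to horizontal.
  set V := S.filter (fun p => |p.1 - σ.1| ≤ |p.2 - σ.2|) with hVdef
  set H := S.filter (fun p => ¬ |p.1 - σ.1| ≤ |p.2 - σ.2|) with hHdef
  have keyV : ∀ p ∈ V, ∀ q ∈ V, |p.1 - q.1| ≤ δ := by
    intro p hp q hq
    rw [hVdef, Finset.mem_filter] at hp hq
    have h1 := h p hp.1 q hq.1
    unfold crossDistInf at h1
    rw [min_eq_left hp.2, min_eq_left hq.2] at h1
    rcases min_le_iff.mp h1 with h2 | h2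
    · calc |p.1 - q.1| ≤ |p.1 - q.1| + |p.2 - q.2| := le_add_of_nonneg_right (abs_nonneg _)
        _ ≤ δ := h2
    · calc |p.1 - q.1| = |(p.1 - σ.1) - (q.1 - σ.1)| := by ring_nf
        _ ≤ |p.1 - σ.1| + |q.1 - σ.1| := abs_sub _ _
        _ ≤ δ := h2
  have keyH : ∀ p ∈ H, ∀ q ∈ H, |p.2 - q.2| ≤ δ := by
    intro p hp q hq
    rw [hHdef, Finset.mem_filter] at hp hq
    have h1 := h p hp.1 q hq.1
    unfold crossDistInf at h1
    rw [min_eq_right (le_of_lt (not_le.mp hp.2)),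
        min_eq_right (le_of_lt (not_le.mp hq.2))] at h1
    rcases min_le_iff.mp h1 with h2 | h2
    · calc |p.2 - q.2| ≤ |p.1 - q.1| + |p.2 - q.2| := le_add_of_nonneg_left (abs_nonneg _)
        _ ≤ δ := h2
    · calc |p.2 - q.2| = |(p.2 - σ.2) - (q.2 - σ.2)| := by ring_nf
        _ ≤ |p.2 - σ.2| + |q.2 - σ.2| := abs_sub _ _
        _ ≤ δ := h2
  refine ⟨if hH : H.Nonempty then (H.image Prod.snd).min' (hH.image _) else 0,
          if hV : V.Nonempty then (V.image Prod.fst).min' (hV.image _) else 0, ?_⟩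
  intro p hp
  by_cases hc : |p.1 - σ.1| ≤ |p.2 - σ.2|
  · right
    have hpV : p ∈ V := by rw [hVdef, Finset.mem_filter]; exact ⟨hp, hc⟩
    have hVne : V.Nonempty := ⟨p, hpV⟩
    rw [dif_pos hVne]
    constructor
    · exact Finset.min'_le _ _ (Finset.mem_image_of_mem _ hpV)
    · obtain ⟨q, hq, hq2⟩ := Finset.mem_image.mp ((V.image Prod.fst).min'_mem (hVne.image _))
      have := keyV p hpV q hq
      rw [← hq2]
      cases abs_le.mp this with
      | intro h1 h2 => linarith
  · left
    have hpH : p ∈ H := by rw [hHdef, Finset.mem_filter]; exact ⟨hp, hc⟩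
    have hHne : H.Nonempty := ⟨p, hpH⟩
    rw [dif_pos hHne]
    constructor
    · exact Finset.min'_le _ _ (Finset.mem_image_of_mem _ hpH)
    · obtain ⟨q, hq, hq2⟩ := Finset.mem_image.mp ((H.image Prod.snd).min'_mem (hHne.image _))
      have := keyH p hpH q hq
      rw [← hq2]
      cases abs_le.mp this with
      | intro h1 h2 => linarith
end

section
/- Conversely, if S is contained in an enclosing cross of width w (union of a horizontal and a vertical strip, each of width w), then placing infinite-speed highways along the middle lines of the two strips gives travel-time diameter at most w. Hence the optimal axis-aligned infinite-speed highway cross travel-time diameter equals the minimum width of an enclosing cross. -/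
lemma crossDistInf_self (σ p : ℝ × ℝ) : crossDistInf σ p p = 0 := by
  unfold crossDistInf
  simp only [sub_self, abs_zero, add_zero, zero_add]
  have : (0:ℝ) ≤ min |p.1 - σ.1| |p.2 - σ.2| + min |p.1 - σ.1| |p.2 - σ.2| := by
    positivity
  exact min_eq_left this

lemma part1 (S : Finset (ℝ × ℝ)) (w a b : ℝ) (_hw : 0 ≤ w)
    (hcov : ∀ p ∈ S, (a ≤ p.2 ∧ p.2 ≤ a + w) ∨ (b ≤ p.1 ∧ p.1 ≤ b + w)) :
    ∀ p ∈ S, ∀ q ∈ S, crossDistInf (b + w / 2, a + w / 2) p q ≤ w := by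
  have key : ∀ r : ℝ × ℝ, ((a ≤ r.2 ∧ r.2 ≤ a + w) ∨ (b ≤ r.1 ∧ r.1 ≤ b + w)) →
      min |r.1 - (b + w / 2)| |r.2 - (a + w / 2)| ≤ w / 2 := by
    rintro r (⟨h1, h2⟩ | ⟨h1, h2⟩)
    · refine le_trans (min_le_right _ _) ?_
      rw [abs_le]; constructor <;> linarith
    · refine le_trans (min_le_left _ _) ?_
      rw [abs_le]; constructor <;> linarith
  intro p hp q hq
  have hp' := key p (hcov p hp)
  have hq' := key q (hcov q hq)
  calc crossDistInf (b + w / 2, a + w / 2) p q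
      ≤ min |p.1 - (b + w / 2)| |p.2 - (a + w / 2)|
        + min |q.1 - (b + w / 2)| |q.2 - (a + w / 2)| := min_le_right _ _
    _ ≤ w / 2 + w / 2 := add_le_add hp' hq'
    _ = w := by ring

theorem stmt11 (S : Finset (ℝ × ℝ)) (hS : S.Nonempty) :
    (∀ (w a b : ℝ), 0 ≤ w →
      (∀ p ∈ S, (a ≤ p.2 ∧ p.2 ≤ a + w) ∨ (b ≤ p.1 ∧ p.1 ≤ b + w)) →
      ∀ p ∈ S, ∀ q ∈ S, crossDistInf (b + w / 2, a + w / 2) p q ≤ w) ∧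
    sInf {x | ∃ σ : ℝ × ℝ, x = sSup {y | ∃ p ∈ S, ∃ q ∈ S, y = crossDistInf σ p q}} =
      sInf {w | 0 ≤ w ∧ ∃ a b : ℝ,
        ∀ p ∈ S, (a ≤ p.2 ∧ p.2 ≤ a + w) ∨ (b ≤ p.1 ∧ p.1 ≤ b + w)} := by
  obtain ⟨p0, hp0⟩ := hS
  refine ⟨part1 S, ?_⟩
  set Y : ℝ × ℝ → Set ℝ := fun σ => {y | ∃ p ∈ S, ∃ q ∈ S, y = crossDistInf σ p q} with hY
  set setA : Set ℝ := {x | ∃ σ : ℝ × ℝ, x = sSup (Y σ)} with hsetA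
  set setB : Set ℝ := {w | 0 ≤ w ∧ ∃ a b : ℝ,
      ∀ p ∈ S, (a ≤ p.2 ∧ p.2 ≤ a + w) ∨ (b ≤ p.1 ∧ p.1 ≤ b + w)} with hsetB
  have hYne : ∀ σ, (Y σ).Nonempty := fun σ =>
    ⟨crossDistInf σ p0 p0, p0, hp0, p0, hp0, rfl⟩
  have hYfin : ∀ σ, (Y σ).Finite := by
    intro σ
    have : Y σ ⊆ (fun pq : (ℝ × ℝ) × (ℝ × ℝ) => crossDistInf σ pq.1 pq.2) ''
        ((S : Set (ℝ × ℝ)) ×ˢ (S : Set (ℝ × ℝ))) := by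
      rintro y ⟨p, hp, q, hq, rfl⟩
      exact ⟨(p, q), ⟨hp, hq⟩, rfl⟩
    exact Set.Finite.subset (Set.Finite.image _ (((S.finite_toSet).prod S.finite_toSet))) this
  have hYbdd : ∀ σ, BddAbove (Y σ) := fun σ => (hYfin σ).bddAbove
  -- D σ ≥ 0
  have hDnonneg : ∀ σ, 0 ≤ sSup (Y σ) := by
    intro σ
    have h0 : (0:ℝ) ∈ Y σ := ⟨p0, hp0, p0, hp0, (crossDistInf_self σ p0).symm⟩
    exact le_csSup (hYbdd σ) h0
  have hAne : setA.Nonempty := ⟨sSup (Y (0, 0)), (0, 0), rfl⟩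
  have hAbdd : BddBelow setA := ⟨0, by rintro x ⟨σ, rfl⟩; exact hDnonneg σ⟩
  have hBbdd : BddBelow setB := ⟨0, fun w hw => hw.1⟩
  -- setB is nonempty : horizontal strip covering all points
  have hBne : setB.Nonempty := by
    refine ⟨S.sup' ⟨p0, hp0⟩ (fun p => p.2) - S.inf' ⟨p0, hp0⟩ (fun p => p.2),
      ?_, S.inf' ⟨p0, hp0⟩ (fun p => p.2), 0, ?_⟩
    · have := Finset.inf'_le (fun p : ℝ × ℝ => p.2) hp0
      have := Finset.le_sup' (fun p : ℝ × ℝ => p.2) hp0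
      linarith
    · intro p hp
      left
      have h1 := Finset.inf'_le (fun p : ℝ × ℝ => p.2) hp
      have h2 := Finset.le_sup' (fun p : ℝ × ℝ => p.2) hp
      constructor <;> linarith
  -- every element of setA is ≥ some (in fact is an) element of setB
  have hBleA : ∀ x ∈ setA, sInf setB ≤ x := by
    rintro x ⟨σ, rfl⟩
    set D := sSup (Y σ) with hD
    have hpair : ∀ p ∈ S, ∀ q ∈ S, crossDistInf σ p q ≤ D := by
      intro p hp q hq
      exact le_csSup (hYbdd σ) ⟨p, hp, q, hq, rfl⟩
    -- split S into points closer to horizontal/vertical highway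
    set H : Finset (ℝ × ℝ) := S.filter (fun p => |p.2 - σ.2| ≤ |p.1 - σ.1|) with hHdef
    have hHy : ∀ p ∈ H, ∀ q ∈ H, |p.2 - q.2| ≤ D := by
      intro p hp q hq
      rw [hHdef, Finset.mem_filter] at hp hq
      refine le_trans (le_min ?_ ?_) (hpair p hp.1 q hq.1)
      · calc |p.2 - q.2| ≤ |p.2 - q.2| + |p.1 - q.1| := le_add_of_nonneg_right (abs_nonneg _)
          _ = |p.1 - q.1| + |p.2 - q.2| := by ring
      · rw [min_eq_right hp.2, min_eq_right hq.2]
        calc |p.2 - q.2| = |(p.2 - σ.2) - (q.2 - σ.2)| := by ring_nf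
          _ ≤ |p.2 - σ.2| + |q.2 - σ.2| := abs_sub _ _
    set V : Finset (ℝ × ℝ) := S.filter (fun p => ¬ |p.2 - σ.2| ≤ |p.1 - σ.1|) with hVdef
    have hVx : ∀ p ∈ V, ∀ q ∈ V, |p.1 - q.1| ≤ D := by
      intro p hp q hq
      rw [hVdef, Finset.mem_filter] at hp hq
      refine le_trans (le_min ?_ ?_) (hpair p hp.1 q hq.1)
      · exact le_add_of_nonneg_right (abs_nonneg _)
      · rw [min_eq_left (le_of_lt (lt_of_not_ge hp.2)),
          min_eq_left (le_of_lt (lt_of_not_ge hq.2))]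
        calc |p.1 - q.1| = |(p.1 - σ.1) - (q.1 - σ.1)| := by ring_nf
          _ ≤ |p.1 - σ.1| + |q.1 - σ.1| := abs_sub _ _
    -- build the cross
    have hmem : D ∈ setB := by
      refine ⟨hDnonneg σ, ?_⟩
      by_cases hHne : H.Nonempty
      · by_cases hVne : V.Nonempty
        · refine ⟨H.inf' hHne (fun p => p.2), V.inf' hVne (fun p => p.1), ?_⟩
          intro p hp
          by_cases hpH : |p.2 - σ.2| ≤ |p.1 - σ.1|
          · left
            have hpH' : p ∈ H := by rw [hHdef, Finset.mem_filter]; exact ⟨hp, hpH⟩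
            obtain ⟨q, hq, hqeq⟩ := Finset.exists_mem_eq_inf' hHne (fun p : ℝ × ℝ => p.2)
            have h1 := Finset.inf'_le (fun p : ℝ × ℝ => p.2) hpH'
            have h2 := hHy p hpH' q hq
            rw [abs_le] at h2
            rw [hqeq] at h1 ⊢
            exact ⟨h1, by linarith [h2.2]⟩
          · right
            have hpV' : p ∈ V := by rw [hVdef, Finset.mem_filter]; exact ⟨hp, hpH⟩
            obtain ⟨q, hq, hqeq⟩ := Finset.exists_mem_eq_inf' hVne (fun p : ℝ × ℝ => p.1)
            have h1 := Finset.inf'_le (fun p : ℝ × ℝ => p.1) hpV'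
            have h2 := hVx p hpV' q hq
            rw [abs_le] at h2
            rw [hqeq] at h1 ⊢
            exact ⟨h1, by linarith [h2.2]⟩
        · -- V empty : all points in H
          refine ⟨H.inf' hHne (fun p => p.2), 0, ?_⟩
          intro p hp
          have hpH' : p ∈ H := by
            rw [hHdef, Finset.mem_filter]
            exact ⟨hp, by
              by_contra hc
              exact hVne ⟨p, by rw [hVdef, Finset.mem_filter]; exact ⟨hp, hc⟩⟩⟩
          left
          obtain ⟨q, hq, hqeq⟩ := Finset.exists_mem_eq_inf' hHne (fun p : ℝ × ℝ => p.2)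
          have h1 := Finset.inf'_le (fun p : ℝ × ℝ => p.2) hpH'
          have h2 := hHy p hpH' q hq
          rw [abs_le] at h2
          rw [hqeq] at h1 ⊢
          exact ⟨h1, by linarith [h2.2]⟩
      · -- H empty : all points in V
        have hVne : V.Nonempty := by
          refine ⟨p0, ?_⟩
          rw [hVdef, Finset.mem_filter]
          exact ⟨hp0, fun hc =>
            hHne ⟨p0, by rw [hHdef, Finset.mem_filter]; exact ⟨hp0, hc⟩⟩⟩
        refine ⟨0, V.inf' hVne (fun p => p.1), ?_⟩
        intro p hp
        have hpV' : p ∈ V := by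
          rw [hVdef, Finset.mem_filter]
          exact ⟨hp, fun hc =>
            hHne ⟨p, by rw [hHdef, Finset.mem_filter]; exact ⟨hp, hc⟩⟩⟩
        right
        obtain ⟨q, hq, hqeq⟩ := Finset.exists_mem_eq_inf' hVne (fun p : ℝ × ℝ => p.1)
        have h1 := Finset.inf'_le (fun p : ℝ × ℝ => p.1) hpV'
        have h2 := hVx p hpV' q hq
        rw [abs_le] at h2
        rw [hqeq] at h1 ⊢
        exact ⟨h1, by linarith [h2.2]⟩
    exact csInf_le hBbdd hmem
  have hAleB : ∀ w ∈ setB, sInf setA ≤ w := by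
    rintro w ⟨hw, a, b, hcov⟩
    have h1 : sSup (Y (b + w / 2, a + w / 2)) ≤ w := by
      apply csSup_le (hYne _)
      rintro y ⟨p, hp, q, hq, rfl⟩
      exact part1 S w a b hw hcov p hp q hq
    exact le_trans (csInf_le hAbdd ⟨(b + w / 2, a + w / 2), rfl⟩) h1
  exact le_antisymm (le_csInf hBne hAleB) (le_csInf hAne hBleA)
end

section
/- Let S be a finite set in ℝ² with L₁-diameter 2, and suppose S admits an enclosing cross of width w. Then the travel-time diameter of the median highways (speed v > 1) is at most w + (2 + w)/v. -/
/-- `L₁` travel-time distance between `p` and `q` given an axis-aligned speed-`v`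
highway cross centered at `σ`: the minimum over the five sensible route types
(no highway, horizontal only, vertical only, horizontal then vertical,
vertical then horizontal). -/
noncomputable def crossDist (v : ℝ) (σ p q : ℝ × ℝ) : ℝ :=
  min (|p.1 - q.1| + |p.2 - q.2|)
    (min (|p.2 - σ.2| + |q.2 - σ.2| + |p.1 - q.1| / v)
      (min (|p.1 - σ.1| + |q.1 - σ.1| + |p.2 - q.2| / v)
        (min (|p.2 - σ.2| + (|p.1 - σ.1| + |q.2 - σ.2|) / v + |q.1 - σ.1|)
          (|p.1 - σ.1| + (|p.2 - σ.2| + |q.1 - σ.1|) / v + |q.2 - σ.2|))))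

theorem stmt12 (v : ℝ) (hv : 1 < v) (S : Finset (ℝ × ℝ))
    (hdiam : (∀ p ∈ S, ∀ q ∈ S, |p.1 - q.1| + |p.2 - q.2| ≤ 2) ∧
      ∃ p ∈ S, ∃ q ∈ S, |p.1 - q.1| + |p.2 - q.2| = 2)
    (w a b : ℝ) (hw : 0 ≤ w)
    (hcross : ∀ p ∈ S, (a ≤ p.2 ∧ p.2 ≤ a + w) ∨ (b ≤ p.1 ∧ p.1 ≤ b + w)) :
    ∀ p ∈ S, ∀ q ∈ S,
      crossDist v (b + w / 2, a + w / 2) p q ≤ w + (2 + w) / v := by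
  obtain ⟨hdall, -⟩ := hdiam
  intro p hp q hq
  have hd := hdall p hp q hq
  have hv0 : (0:ℝ) < v := lt_trans one_pos hv
  have hx : |p.1 - q.1| ≤ 2 := by have := abs_nonneg (p.2 - q.2); linarith
  have hy : |p.2 - q.2| ≤ 2 := by have := abs_nonneg (p.1 - q.1); linarith
  have hwv : 0 ≤ w / v := div_nonneg hw hv0.le
  unfold crossDist
  simp only []
  rcases hcross p hp with hp2 | hp1 <;> rcases hcross q hq with hq2 | hq1
  · -- both in horizontal strip: route 2
    refine le_trans (le_trans (min_le_right _ _) (min_le_left _ _)) ?_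
    have h1 : |p.2 - (a + w / 2)| ≤ w / 2 := abs_le.2 ⟨by linarith [hp2.1], by linarith [hp2.2]⟩
    have h2 : |q.2 - (a + w / 2)| ≤ w / 2 := abs_le.2 ⟨by linarith [hq2.1], by linarith [hq2.2]⟩
    have h3 : |p.1 - q.1| / v ≤ (2 + w) / v := by gcongr; linarith
    linarith
  · -- p horizontal, q vertical: route 4
    refine le_trans (le_trans (min_le_right _ _)
      (le_trans (min_le_right _ _) (le_trans (min_le_right _ _) (min_le_left _ _)))) ?_
    have h1 : |p.2 - (a + w / 2)| ≤ w / 2 := abs_le.2 ⟨by linarith [hp2.1], by linarith [hp2.2]⟩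
    have h2 : |q.1 - (b + w / 2)| ≤ w / 2 := abs_le.2 ⟨by linarith [hq1.1], by linarith [hq1.2]⟩
    have h3 : |p.1 - (b + w / 2)| ≤ |p.1 - q.1| + |q.1 - (b + w / 2)| := abs_sub_le _ _ _
    have h4 : |q.2 - (a + w / 2)| ≤ |q.2 - p.2| + |p.2 - (a + w / 2)| := abs_sub_le _ _ _
    have h5 : |q.2 - p.2| = |p.2 - q.2| := abs_sub_comm _ _
    have h6 : (|p.1 - (b + w / 2)| + |q.2 - (a + w / 2)|) / v ≤ (2 + w) / v := by
      apply div_le_div_of_nonneg_right ?_ hv0.le <;> linarith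
    linarith
  · -- p vertical, q horizontal: route 5
    refine le_trans (le_trans (min_le_right _ _)
      (le_trans (min_le_right _ _) (le_trans (min_le_right _ _) (min_le_right _ _)))) ?_
    have h1 : |p.1 - (b + w / 2)| ≤ w / 2 := abs_le.2 ⟨by linarith [hp1.1], by linarith [hp1.2]⟩
    have h2 : |q.2 - (a + w / 2)| ≤ w / 2 := abs_le.2 ⟨by linarith [hq2.1], by linarith [hq2.2]⟩
    have h3 : |p.2 - (a + w / 2)| ≤ |p.2 - q.2| + |q.2 - (a + w / 2)| := abs_sub_le _ _ _
    have h4 : |q.1 - (b + w / 2)| ≤ |q.1 - p.1| + |p.1 - (b + w / 2)| := abs_sub_le _ _ _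
    have h5 : |q.1 - p.1| = |p.1 - q.1| := abs_sub_comm _ _
    have h6 : (|p.2 - (a + w / 2)| + |q.1 - (b + w / 2)|) / v ≤ (2 + w) / v := by
      apply div_le_div_of_nonneg_right ?_ hv0.le <;> linarith
    linarith
  · -- both in vertical strip: route 3
    refine le_trans (le_trans (min_le_right _ _)
      (le_trans (min_le_right _ _) (min_le_left _ _))) ?_
    have h1 : |p.1 - (b + w / 2)| ≤ w / 2 := abs_le.2 ⟨by linarith [hp1.1], by linarith [hp1.2]⟩
    have h2 : |q.1 - (b + w / 2)| ≤ w / 2 := abs_le.2 ⟨by linarith [hq1.1], by linarith [hq1.2]⟩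
    have h3 : |p.2 - q.2| / v ≤ (2 + w) / v := by gcongr; linarith
    linarith
end

section
/- The travel-time diameter δ_med of the median highway cross (speed v > 1, L₁ metric) satisfies δ_med ≤ (2 + 1/v)·δ_opt, where δ_opt is the travel-time diameter of the optimal axis-aligned speed-v highway cross. -/
section aux

variable {v : ℝ}

private lemma crossDist_nonneg (hv : 0 < v) (σ p q : ℝ × ℝ) :
    0 ≤ crossDist v σ p q := by
  unfold crossDist
  have h1 := abs_nonneg (p.1 - q.1)
  have h2 := abs_nonneg (p.2 - q.2)
  have h3 := abs_nonneg (p.1 - σ.1)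
  have h4 := abs_nonneg (p.2 - σ.2)
  have h5 := abs_nonneg (q.1 - σ.1)
  have h6 := abs_nonneg (q.2 - σ.2)
  have d1 : 0 ≤ |p.1 - q.1| / v := div_nonneg h1 hv.le
  have d2 : 0 ≤ |p.2 - q.2| / v := div_nonneg h2 hv.le
  have d3 : 0 ≤ (|p.1 - σ.1| + |q.2 - σ.2|) / v := div_nonneg (by linarith) hv.le
  have d4 : 0 ≤ (|p.2 - σ.2| + |q.1 - σ.1|) / v := div_nonneg (by linarith) hv.le
  refine le_min (by linarith) (le_min (by linarith) (le_min (by linarith)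
    (le_min (by linarith) (by linarith))))

private lemma L1_le_v_mul (hv : 1 ≤ v) (σ p q : ℝ × ℝ) :
    |p.1 - q.1| + |p.2 - q.2| ≤ v * crossDist v σ p q := by
  have hv0 : (0:ℝ) < v := lt_of_lt_of_le one_pos hv
  rw [← div_le_iff₀' hv0]
  unfold crossDist
  have trix : |p.1 - q.1| ≤ |p.1 - σ.1| + |q.1 - σ.1| := by
    have := abs_sub_le p.1 σ.1 q.1
    rwa [abs_sub_comm σ.1 q.1] at this
  have triy : |p.2 - q.2| ≤ |p.2 - σ.2| + |q.2 - σ.2| := by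
    have := abs_sub_le p.2 σ.2 q.2
    rwa [abs_sub_comm σ.2 q.2] at this
  have h1 := abs_nonneg (p.1 - q.1)
  have h2 := abs_nonneg (p.2 - q.2)
  have h3 := abs_nonneg (p.1 - σ.1)
  have h4 := abs_nonneg (p.2 - σ.2)
  have h5 := abs_nonneg (q.1 - σ.1)
  have h6 := abs_nonneg (q.2 - σ.2)
  refine le_min ?_ (le_min ?_ (le_min ?_ (le_min ?_ ?_))) <;>
    rw [div_le_iff₀ hv0]
  · nlinarith
  · have e : |p.1 - q.1| / v * v = |p.1 - q.1| := div_mul_cancel₀ _ (ne_of_gt hv0)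
    nlinarith
  · have e : |p.2 - q.2| / v * v = |p.2 - q.2| := div_mul_cancel₀ _ (ne_of_gt hv0)
    nlinarith
  · have e : (|p.1 - σ.1| + |q.2 - σ.2|) / v * v = |p.1 - σ.1| + |q.2 - σ.2| :=
      div_mul_cancel₀ _ (ne_of_gt hv0)
    nlinarith
  · have e : (|p.2 - σ.2| + |q.1 - σ.1|) / v * v = |p.2 - σ.2| + |q.1 - σ.1| :=
      div_mul_cancel₀ _ (ne_of_gt hv0)
    nlinarith

private lemma class_y (hv : 1 ≤ v) (σ p q : ℝ × ℝ)
    (hp : |p.2 - σ.2| ≤ |p.1 - σ.1|) (hq : |q.2 - σ.2| ≤ |q.1 - σ.1|) :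
    |p.2 - q.2| ≤ crossDist v σ p q := by
  have hv0 : (0:ℝ) < v := lt_of_lt_of_le one_pos hv
  unfold crossDist
  have triy : |p.2 - q.2| ≤ |p.2 - σ.2| + |q.2 - σ.2| := by
    have := abs_sub_le p.2 σ.2 q.2
    rwa [abs_sub_comm σ.2 q.2] at this
  have h1 := abs_nonneg (p.1 - q.1)
  have h2 := abs_nonneg (p.2 - q.2)
  have d1 : 0 ≤ |p.1 - q.1| / v := div_nonneg h1 hv0.le
  have d2 : 0 ≤ |p.2 - q.2| / v := div_nonneg h2 hv0.le
  have d3 : 0 ≤ (|p.1 - σ.1| + |q.2 - σ.2|) / v :=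
    div_nonneg (by positivity) hv0.le
  have d4 : 0 ≤ (|p.2 - σ.2| + |q.1 - σ.1|) / v :=
    div_nonneg (by positivity) hv0.le
  refine le_min (by linarith) (le_min (by linarith) (le_min (by linarith)
    (le_min (by linarith) (by linarith))))

private lemma class_x (hv : 1 ≤ v) (σ p q : ℝ × ℝ)
    (hp : |p.1 - σ.1| ≤ |p.2 - σ.2|) (hq : |q.1 - σ.1| ≤ |q.2 - σ.2|) :
    |p.1 - q.1| ≤ crossDist v σ p q := by
  have hv0 : (0:ℝ) < v := lt_of_lt_of_le one_pos hv
  unfold crossDist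
  have trix : |p.1 - q.1| ≤ |p.1 - σ.1| + |q.1 - σ.1| := by
    have := abs_sub_le p.1 σ.1 q.1
    rwa [abs_sub_comm σ.1 q.1] at this
  have h1 := abs_nonneg (p.1 - q.1)
  have h2 := abs_nonneg (p.2 - q.2)
  have d1 : 0 ≤ |p.1 - q.1| / v := div_nonneg h1 hv0.le
  have d2 : 0 ≤ |p.2 - q.2| / v := div_nonneg h2 hv0.le
  have d3 : 0 ≤ (|p.1 - σ.1| + |q.2 - σ.2|) / v :=
    div_nonneg (by positivity) hv0.le
  have d4 : 0 ≤ (|p.2 - σ.2| + |q.1 - σ.1|) / v :=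
    div_nonneg (by positivity) hv0.le
  refine le_min (by linarith) (le_min (by linarith) (le_min (by linarith)
    (le_min (by linarith) (by linarith))))

private lemma median_bound (hv : 0 < v) (σ p q : ℝ × ℝ) (h : ℝ) (hh : 0 ≤ h)
    (hp : |p.2 - σ.2| ≤ h ∨ |p.1 - σ.1| ≤ h)
    (hq : |q.2 - σ.2| ≤ h ∨ |q.1 - σ.1| ≤ h) :
    crossDist v σ p q ≤ 2 * h + (|p.1 - q.1| + |p.2 - q.2| + 2 * h) / v := by
  have h1 := abs_nonneg (p.1 - q.1)
  have h2 := abs_nonneg (p.2 - q.2)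
  have trip1 : |p.1 - σ.1| ≤ |p.1 - q.1| + |q.1 - σ.1| := abs_sub_le p.1 q.1 σ.1
  have trip2 : |p.2 - σ.2| ≤ |p.2 - q.2| + |q.2 - σ.2| := abs_sub_le p.2 q.2 σ.2
  have triq1 : |q.1 - σ.1| ≤ |p.1 - q.1| + |p.1 - σ.1| := by
    have := abs_sub_le q.1 p.1 σ.1
    rwa [abs_sub_comm q.1 p.1] at this
  have triq2 : |q.2 - σ.2| ≤ |p.2 - q.2| + |p.2 - σ.2| := by
    have := abs_sub_le q.2 p.2 σ.2
    rwa [abs_sub_comm q.2 p.2] at this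
  have hdiv : ∀ x y : ℝ, x ≤ y → x / v ≤ y / v :=
    fun x y hxy => div_le_div_of_nonneg_right hxy hv.le
  rcases hp with hp | hp <;> rcases hq with hq | hq
  · -- both near the horizontal line : use term 2
    have hle : crossDist v σ p q ≤ |p.2 - σ.2| + |q.2 - σ.2| + |p.1 - q.1| / v :=
      (min_le_right _ _).trans (min_le_left _ _)
    have e := hdiv (|p.1 - q.1|) (|p.1 - q.1| + |p.2 - q.2| + 2 * h) (by linarith)
    linarith
  · -- p near horizontal, q near vertical : use term 4
    have hle : crossDist v σ p q ≤
        |p.2 - σ.2| + (|p.1 - σ.1| + |q.2 - σ.2|) / v + |q.1 - σ.1| :=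
      (min_le_right _ _).trans ((min_le_right _ _).trans
        ((min_le_right _ _).trans (min_le_left _ _)))
    have e := hdiv (|p.1 - σ.1| + |q.2 - σ.2|)
      (|p.1 - q.1| + |p.2 - q.2| + 2 * h) (by linarith)
    linarith
  · -- p near vertical, q near horizontal : use term 5
    have hle : crossDist v σ p q ≤
        |p.1 - σ.1| + (|p.2 - σ.2| + |q.1 - σ.1|) / v + |q.2 - σ.2| :=
      (min_le_right _ _).trans ((min_le_right _ _).trans
        ((min_le_right _ _).trans (min_le_right _ _)))
    have e := hdiv (|p.2 - σ.2| + |q.1 - σ.1|)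
      (|p.1 - q.1| + |p.2 - q.2| + 2 * h) (by linarith)
    linarith
  · -- both near the vertical line : use term 3
    have hle : crossDist v σ p q ≤ |p.1 - σ.1| + |q.1 - σ.1| + |p.2 - q.2| / v :=
      (min_le_right _ _).trans ((min_le_right _ _).trans (min_le_left _ _))
    have e := hdiv (|p.2 - q.2|) (|p.1 - q.1| + |p.2 - q.2| + 2 * h) (by linarith)
    linarith

private lemma pairSet_finite (v : ℝ) (σ : ℝ × ℝ) (S : Finset (ℝ × ℝ)) :
    ({x : ℝ | ∃ p ∈ S, ∃ q ∈ S, x = crossDist v σ p q}).Finite := by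
  have hsub : {x : ℝ | ∃ p ∈ S, ∃ q ∈ S, x = crossDist v σ p q} ⊆
      (fun pq : (ℝ × ℝ) × (ℝ × ℝ) => crossDist v σ pq.1 pq.2) ''
        ((↑S : Set (ℝ × ℝ)) ×ˢ (↑S : Set (ℝ × ℝ))) := by
    rintro x ⟨p, hp, q, hq, rfl⟩
    exact ⟨(p, q), ⟨hp, hq⟩, rfl⟩
  exact Set.Finite.subset ((S.finite_toSet.prod S.finite_toSet).image _) hsub

end aux

theorem stmt13 (v : ℝ) (hv : 1 < v) (S : Finset (ℝ × ℝ)) (hS : S.Nonempty)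
    (w a b : ℝ) (hw : 0 ≤ w)
    (hcross : ∀ p ∈ S, (a ≤ p.2 ∧ p.2 ≤ a + w) ∨ (b ≤ p.1 ∧ p.1 ≤ b + w))
    (hmin : ∀ w' a' b', 0 ≤ w' →
      (∀ p ∈ S, (a' ≤ p.2 ∧ p.2 ≤ a' + w') ∨ (b' ≤ p.1 ∧ p.1 ≤ b' + w')) → w ≤ w')
    (δmed δopt : ℝ)
    (hδmed : δmed = sSup {x | ∃ p ∈ S, ∃ q ∈ S,
      x = crossDist v (b + w / 2, a + w / 2) p q})
    (hδopt : IsLeast {x | ∃ σ : ℝ × ℝ,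
      x = sSup {y | ∃ p ∈ S, ∃ q ∈ S, y = crossDist v σ p q}} δopt) :
    δmed ≤ (2 + 1 / v) * δopt := by
  classical
  have hv0 : (0:ℝ) < v := lt_trans one_pos hv
  have hv1 : (1:ℝ) ≤ v := hv.le
  obtain ⟨⟨σ₀, hσ₀⟩, -⟩ := hδopt
  obtain ⟨p₀, hp₀⟩ := hS
  have hbdd : BddAbove {x : ℝ | ∃ p ∈ S, ∃ q ∈ S, x = crossDist v σ₀ p q} :=
    (pairSet_finite v σ₀ S).bddAbove
  -- every pair value at σ₀ is at most δopt
  have hkey : ∀ p ∈ S, ∀ q ∈ S, crossDist v σ₀ p q ≤ δopt := by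
    intro p hp q hq
    rw [hσ₀]
    exact le_csSup hbdd ⟨p, hp, q, hq, rfl⟩
  have hopt_nonneg : 0 ≤ δopt :=
    le_trans (crossDist_nonneg hv0 σ₀ p₀ p₀) (hkey p₀ hp₀ p₀ hp₀)
  -- the minimal enclosing-cross width is at most δopt
  have hwopt : w ≤ δopt := by
    set Hy : Finset ℝ :=
      (S.filter (fun p => |p.2 - σ₀.2| ≤ |p.1 - σ₀.1|)).image Prod.snd with hHy
    set Vx : Finset ℝ :=
      (S.filter (fun p => ¬ |p.2 - σ₀.2| ≤ |p.1 - σ₀.1|)).image Prod.fst with hVx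
    refine hmin δopt (if h : Hy.Nonempty then Hy.min' h else 0)
      (if h : Vx.Nonempty then Vx.min' h else 0) hopt_nonneg ?_
    intro p hp
    by_cases hc : |p.2 - σ₀.2| ≤ |p.1 - σ₀.1|
    · left
      have hpH : p.2 ∈ Hy := Finset.mem_image_of_mem _ (Finset.mem_filter.mpr ⟨hp, hc⟩)
      have hne : Hy.Nonempty := ⟨p.2, hpH⟩
      rw [dif_pos hne]
      refine ⟨Finset.min'_le _ _ hpH, ?_⟩
      obtain ⟨q, hqH, hq2⟩ := Finset.mem_image.mp (Hy.min'_mem hne)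
      obtain ⟨hqS, hqc⟩ := Finset.mem_filter.mp hqH
      have hcd : |p.2 - q.2| ≤ crossDist v σ₀ p q := class_y hv1 σ₀ p q hc hqc
      have h2 := hkey p hp q hqS
      have h3 : p.2 - q.2 ≤ |p.2 - q.2| := le_abs_self _
      rw [← hq2]
      linarith
    · right
      have hpV : p.1 ∈ Vx := Finset.mem_image_of_mem _ (Finset.mem_filter.mpr ⟨hp, hc⟩)
      have hne : Vx.Nonempty := ⟨p.1, hpV⟩
      rw [dif_pos hne]
      refine ⟨Finset.min'_le _ _ hpV, ?_⟩
      obtain ⟨q, hqV, hq1⟩ := Finset.mem_image.mp (Vx.min'_mem hne)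
      obtain ⟨hqS, hqc⟩ := Finset.mem_filter.mp hqV
      have hcd : |p.1 - q.1| ≤ crossDist v σ₀ p q :=
        class_x hv1 σ₀ p q (not_le.mp hc).le (not_le.mp hqc).le
      have h2 := hkey p hp q hqS
      have h3 : p.1 - q.1 ≤ |p.1 - q.1| := le_abs_self _
      rw [← hq1]
      linarith
  -- conclude
  rw [hδmed]
  have htarget_nonneg : 0 ≤ (2 + 1 / v) * δopt := by
    have : (0:ℝ) ≤ 1 / v := by positivity
    nlinarith
  refine Real.sSup_le ?_ htarget_nonneg
  rintro x ⟨p, hp, q, hq, rfl⟩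
  set σm : ℝ × ℝ := (b + w / 2, a + w / 2) with hσm
  have hpstrip : |p.2 - σm.2| ≤ w / 2 ∨ |p.1 - σm.1| ≤ w / 2 := by
    rcases hcross p hp with ⟨h₁, h₂⟩ | ⟨h₁, h₂⟩
    · left
      rw [abs_le]
      constructor <;> simp only [hσm] <;> linarith
    · right
      rw [abs_le]
      constructor <;> simp only [hσm] <;> linarith
  have hqstrip : |q.2 - σm.2| ≤ w / 2 ∨ |q.1 - σm.1| ≤ w / 2 := by
    rcases hcross q hq with ⟨h₁, h₂⟩ | ⟨h₁, h₂⟩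
    · left
      rw [abs_le]
      constructor <;> simp only [hσm] <;> linarith
    · right
      rw [abs_le]
      constructor <;> simp only [hσm] <;> linarith
  have hmb := median_bound hv0 σm p q (w / 2) (by linarith) hpstrip hqstrip
  have hL1 : |p.1 - q.1| + |p.2 - q.2| ≤ v * δopt :=
    (L1_le_v_mul hv1 σ₀ p q).trans
      (mul_le_mul_of_nonneg_left (hkey p hp q hq) hv0.le)
  have hdivle : (|p.1 - q.1| + |p.2 - q.2| + 2 * (w / 2)) / v ≤ δopt + δopt / v := by
    rw [div_le_iff₀ hv0, add_mul, div_mul_cancel₀ _ (ne_of_gt hv0)]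
    nlinarith
  have hexp : (2 + 1 / v) * δopt = 2 * δopt + δopt / v := by ring
  linarith
end
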